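/- For every integer n ≥ 1, the sum over j from 2 to n of (j/n)^{(j-2)/4} is at most 15 (interpreting the empty sum as 0 when n = 1). -/

import Mathlib

open Finset Real

/-!
Write `φ(t) = (t - 2) log (t / n)`, so that the `j`-th term is `exp (φ j / 4)`. For `2 j ≤ n` the
base is at most `1 / 2`, and the terms are dominated by the geometric series `(2 ^ (-1/4)) ^ (j - 2)`.
On `[n / 2, n]` the function `φ` is convex and vanishes at `n`, so it lies below its chord:
`φ j ≤ -(1 - 4 / n) (n - j) log 2`, which for `n ≥ 16` gives the geometric decay
`(2 ^ (-3/16)) ^ (n - j)`. With the ratios `17/20 ≥ 2 ^ (-1/4)` and `22/25 ≥ 2 ^ (-3/16)` the two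
geometric series sum to `20/3 + 25/3 = 15`. For `n < 16` there are at most `15` terms, each `≤ 1`.
-/

lemma mul_log_le_of_half_le {x : ℝ} (h₁ : 1 / 2 ≤ x) (h₂ : x ≤ 1) :
    x * log x ≤ -((1 - x) * log 2) := by
  have h := convexOn_mul_log.2 (show (1 / 2 : ℝ) ∈ Set.Ici 0 by norm_num)
    (show (1 : ℝ) ∈ Set.Ici 0 by norm_num)
    (show 0 ≤ 2 * (1 - x) by linarith) (show 0 ≤ 2 * x - 1 by linarith) (by ring)
  simp only [smul_eq_mul] at h
  rw [show 2 * (1 - x) * (1 / 2) + (2 * x - 1) * 1 = x by ring] at h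
  simp only [one_div, log_inv, log_one, mul_zero, add_zero] at h
  linarith

lemma neg_mul_log_two_le_log {x : ℝ} (h₁ : 1 / 2 ≤ x) (h₂ : x ≤ 1) :
    -(2 * (1 - x) * log 2) ≤ log x := by
  have h := strictConcaveOn_log_Ioi.concaveOn.2 (show (1 / 2 : ℝ) ∈ Set.Ioi 0 by norm_num)
    (show (1 : ℝ) ∈ Set.Ioi 0 by norm_num)
    (show 0 ≤ 2 * (1 - x) by linarith) (show 0 ≤ 2 * x - 1 by linarith) (by ring)
  simp only [smul_eq_mul] at h
  rw [show 2 * (1 - x) * (1 / 2) + (2 * x - 1) * 1 = x by ring] at h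
  simp only [one_div, log_inv, log_one, mul_zero, add_zero] at h
  linarith

lemma sub_two_mul_log_le {n x : ℝ} (hn : 0 ≤ n) (h₁ : 1 / 2 ≤ x) (h₂ : x ≤ 1) :
    (n * x - 2) * log x ≤ -((n - 4) * (1 - x) * log 2) := by
  have h := mul_le_mul_of_nonneg_left (mul_log_le_of_half_le h₁ h₂) hn
  have h' := neg_mul_log_two_le_log h₁ h₂
  linarith

lemma rpow_le_pow_of_log_mul_le {b d e : ℝ} {k : ℕ} (hb : 0 < b) (hd : 0 < d)
    (h : log b * e ≤ log d * k) : b ^ e ≤ d ^ k := by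
  rw [rpow_def_of_pos hb, ← rpow_natCast, rpow_def_of_pos hd]
  exact exp_le_exp.2 h

lemma sum_le_inv_one_sub_of_le_pow {ι : Type*} {s : Finset ι} {f : ι → ℝ} {g : ι → ℕ} {r : ℝ}
    (hg : Set.InjOn g s) (h₀ : 0 ≤ r) (h₁ : r < 1) (hf : ∀ i ∈ s, f i ≤ r ^ g i) :
    ∑ i ∈ s, f i ≤ (1 - r)⁻¹ := by
  calc ∑ i ∈ s, f i ≤ ∑ k ∈ s.image g, r ^ k := by rw [sum_image hg]; exact sum_le_sum hf
    _ ≤ ∑' k, r ^ k :=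
      Summable.sum_le_tsum _ (fun _ _ ↦ by positivity) (summable_geometric_of_lt_one h₀ h₁)
    _ = (1 - r)⁻¹ := tsum_geometric_of_lt_one h₀ h₁

variable {n j : ℕ}

lemma div_rpow_le_one (hj : 2 ≤ j) (hjn : j ≤ n) :
    ((j : ℝ) / n) ^ (((j : ℝ) - 2) / 4) ≤ 1 := by
  have hj' : (2 : ℝ) ≤ j := by exact_mod_cast hj
  exact rpow_le_one (by positivity) (div_le_one_of_le₀ (by exact_mod_cast hjn) (by positivity))
    (by linarith)

lemma div_rpow_le_pow_sub_two {d : ℝ} (hd₀ : 0 < d) (hd : 1 / 2 ≤ d ^ 4)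
    (hj : 2 ≤ j) (hjn : 2 * j ≤ n) :
    ((j : ℝ) / n) ^ (((j : ℝ) - 2) / 4) ≤ d ^ (j - 2) := by
  have hj' : (2 : ℝ) ≤ j := by exact_mod_cast hj
  have hjn' : 2 * (j : ℝ) ≤ n := by exact_mod_cast hjn
  have hn₀ : (0 : ℝ) < n := by linarith
  refine rpow_le_pow_of_log_mul_le (by positivity) hd₀ ?_
  have hlog : log ((j : ℝ) / n) ≤ -log 2 := by
    rw [← log_inv]
    exact log_le_log (by positivity) (by rw [div_le_iff₀ hn₀]; linarith)
  have hlogd : -log 2 ≤ 4 * log d := by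
    have h := log_le_log (by norm_num) hd
    rw [log_pow, one_div, log_inv] at h
    push_cast at h
    exact h
  rw [Nat.cast_sub hj]
  push_cast
  nlinarith

lemma div_rpow_le_pow_sub {d : ℝ} (hd₀ : 0 < d) (hd : 1 / 8 ≤ d ^ 16)
    (hn : 16 ≤ n) (hjn : n ≤ 2 * j) (hj : j ≤ n) :
    ((j : ℝ) / n) ^ (((j : ℝ) - 2) / 4) ≤ d ^ (n - j) := by
  have hn' : (16 : ℝ) ≤ n := by exact_mod_cast hn
  have hjn' : (n : ℝ) ≤ 2 * j := by exact_mod_cast hjn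
  have hj' : (j : ℝ) ≤ n := by exact_mod_cast hj
  set x := (j : ℝ) / n with hx
  have hnx : n * x = j := by rw [hx]; field_simp
  have hx₁ : 1 / 2 ≤ x := by rw [hx, le_div_iff₀ (by positivity)]; linarith
  have hx₂ : x ≤ 1 := by rw [hx, div_le_one (by positivity)]; exact hj'
  refine rpow_le_pow_of_log_mul_le (by positivity) hd₀ ?_
  have hchord := sub_two_mul_log_le (n := (n : ℝ)) (by positivity) hx₁ hx₂
  rw [hnx] at hchord
  have hlogd : -(3 * log 2) ≤ 16 * log d := by
    have h := log_le_log (by norm_num) hd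
    rw [log_pow, one_div, log_inv, show (8 : ℝ) = 2 ^ 3 by norm_num, log_pow] at h
    push_cast at h
    exact h
  have hlog2 : 0 < log 2 := log_pos one_lt_two
  have hcoef : 3 / 4 * (n - j) ≤ (n - 4) * (1 - x) := by nlinarith
  rw [Nat.cast_sub hj]
  nlinarith

theorem sum_ratio_pow_le (n : ℕ) :
    ∑ j ∈ Finset.Icc 2 n, ((j : ℝ) / (n : ℝ)) ^ (((j : ℝ) - 2) / 4) ≤ 15 := by
  rcases lt_or_ge n 16 with hn | hn
  · refine (sum_le_card_nsmul _ _ 1 fun j hj ↦ ?_).trans ?_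
    · rw [mem_Icc] at hj
      exact div_rpow_le_one hj.1 hj.2
    · rw [Nat.card_Icc, nsmul_eq_mul, mul_one]
      exact_mod_cast (by omega : n + 1 - 2 ≤ 15)
  rw [← sum_filter_add_sum_filter_not _ (fun j ↦ 2 * j ≤ n)]
  calc _ ≤ (1 - 17 / 20 : ℝ)⁻¹ + (1 - 22 / 25 : ℝ)⁻¹ := by
        gcongr
        · refine sum_le_inv_one_sub_of_le_pow (g := (· - 2)) ?_ (by norm_num) (by norm_num)
            fun j hj ↦ ?_
          · intro a ha b hb hab
            simp only [coe_filter, mem_Icc, Set.mem_ofPred_eq] at ha hb hab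
            omega
          · rw [mem_filter, mem_Icc] at hj
            exact div_rpow_le_pow_sub_two (by norm_num) (by norm_num) hj.1.1 hj.2
        · refine sum_le_inv_one_sub_of_le_pow (g := (n - ·)) ?_ (by norm_num) (by norm_num)
            fun j hj ↦ ?_
          · intro a ha b hb hab
            simp only [coe_filter, mem_Icc, Set.mem_ofPred_eq] at ha hb hab
            omega
          · rw [mem_filter, mem_Icc] at hj
            exact div_rpow_le_pow_sub (by norm_num) (by norm_num) hn (by omega) hj.1.2
    _ = 15 := by norm_num
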